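/- arXiv:1401.3133 — 9 statements merged into one kernel-verified Lean document; each statement's English description precedes it below -/
import Mathlib

section
/- Let A be an acceptance set in L^∞ (a nonempty proper subset closed upward: X ∈ A and Y ≥ X a.s. imply Y ∈ A). Then the following are equivalent: (a) A is surplus invariant (X ∈ A and Y⁻ = X⁻ imply Y ∈ A); (b) X ∈ A implies X·1_B ∈ A for every measurable set B; (c) X ∈ A implies -X⁻ ∈ A. In particular, every surplus-invariant acceptance set contains 0. -/
open MeasureTheory

variable {Ω : Type*} [MeasurableSpace Ω]

/-- An acceptance set: a nonempty, proper subset of `L^∞` that is upward closed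
(w.r.t. the a.e. order on `Lp ℝ ∞ μ`). -/
def IsAcceptanceSet (μ : Measure Ω) (A : Set (Lp ℝ ⊤ μ)) : Prop :=
  A.Nonempty ∧ A ≠ Set.univ ∧ ∀ X ∈ A, ∀ Y : Lp ℝ ⊤ μ, X ≤ Y → Y ∈ A

/-- Surplus invariance: if `X ∈ A` and `Y⁻ = X⁻` then `Y ∈ A`.
Here `X⁻ = (-X) ⊔ 0` is the negative part. -/
def SurplusInvariant (μ : Measure Ω) (A : Set (Lp ℝ ⊤ μ)) : Prop :=
  ∀ X ∈ A, ∀ Y : Lp ℝ ⊤ μ, (-Y) ⊔ 0 = (-X) ⊔ 0 → Y ∈ A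

/-!
Since `X⁻ = -(X ⊓ 0)`, two positions have the same negative part exactly when they have the same
truncation `X ⊓ 0`. Hence an upward closed set is surplus invariant iff it is closed under
`X ↦ X ⊓ 0`. Multiplying by an indicator `1_B` gives a position lying above `X ⊓ 0`, and the
choice `B = {X ≤ 0}` gives exactly `X ⊓ 0`.
-/

lemma negPart_eq_negPart_iff {α : Type*} [Lattice α] [AddGroup α] [AddLeftMono α]
    [AddRightMono α] {a b : α} : a⁻ = b⁻ ↔ a ⊓ 0 = b ⊓ 0 := by
  rw [negPart_eq_neg_inf_zero, negPart_eq_neg_inf_zero, neg_inj]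

lemma negPart_inf_zero {α : Type*} [Lattice α] [AddGroup α] [AddLeftMono α] [AddRightMono α]
    (a : α) : (a ⊓ 0)⁻ = a⁻ :=
  negPart_eq_negPart_iff.2 (by rw [inf_assoc, inf_idem])

lemma min_zero_le_mul_indicator_one {ι : Type*} (B : Set ι) (f : ι → ℝ) (x : ι) :
    min (f x) 0 ≤ f x * B.indicator 1 x := by
  by_cases hx : x ∈ B <;> simp [hx]

lemma mul_indicator_nonpos_eq_min_zero {ι : Type*} (f : ι → ℝ) (x : ι) :
    f x * {y | f y ≤ 0}.indicator 1 x = min (f x) 0 := by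
  by_cases hx : f x ≤ 0
  · simp [hx]
  · simp [hx, (not_le.1 hx).le]

section

variable {μ : Measure Ω} {A : Set (Lp ℝ ⊤ μ)}

lemma IsAcceptanceSet.isUpperSet (hA : IsAcceptanceSet μ A) : IsUpperSet A :=
  fun X Y hXY hX => hA.2.2 X hX Y hXY

lemma SurplusInvariant.inf_zero_mem (hs : SurplusInvariant μ A) {X : Lp ℝ ⊤ μ} (hX : X ∈ A) :
    X ⊓ 0 ∈ A :=
  hs X hX (X ⊓ 0) (negPart_inf_zero X)

lemma surplusInvariant_of_inf_zero_mem (hup : IsUpperSet A) (h : ∀ X ∈ A, X ⊓ 0 ∈ A) :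
    SurplusInvariant μ A := by
  intro X hX Y hXY
  have hinf : Y ⊓ 0 = X ⊓ 0 := negPart_eq_negPart_iff.1 hXY
  exact hup inf_le_left (hinf ▸ h X hX)

lemma SurplusInvariant.zero_mem (hs : SurplusInvariant μ A) (hup : IsUpperSet A)
    (hne : A.Nonempty) : (0 : Lp ℝ ⊤ μ) ∈ A :=
  hne.elim fun _ hX => hup inf_le_right (hs.inf_zero_mem hX)

lemma inf_zero_le_of_ae_eq_mul_indicator {X Y : Lp ℝ ⊤ μ} {B : Set Ω}
    (hY : ⇑Y =ᵐ[μ] fun ω => X ω * B.indicator 1 ω) : X ⊓ 0 ≤ Y := by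
  rw [← Lp.coeFn_le]
  filter_upwards [Lp.coeFn_inf X 0, Lp.coeFn_zero ℝ ⊤ μ, hY] with ω hinf hzero hYω
  rw [hinf, Pi.inf_apply, hzero, hYω]
  exact min_zero_le_mul_indicator_one B X ω

lemma inf_zero_ae_eq_mul_indicator_nonpos (X : Lp ℝ ⊤ μ) :
    ⇑(X ⊓ 0) =ᵐ[μ] fun ω => X ω * {x | X x ≤ 0}.indicator 1 ω := by
  filter_upwards [Lp.coeFn_inf X 0, Lp.coeFn_zero ℝ ⊤ μ] with ω hinf hzero
  rw [hinf, Pi.inf_apply, hzero, mul_indicator_nonpos_eq_min_zero]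
  rfl

end

theorem surplus_invariance_characterization_general
    (μ : Measure Ω) (A : Set (Lp ℝ ⊤ μ))
    (hA : IsAcceptanceSet μ A) :
    (SurplusInvariant μ A ↔
       ∀ X ∈ A, ∀ B : Set Ω, MeasurableSet B →
         ∀ Y : Lp ℝ ⊤ μ, (⇑Y =ᵐ[μ] fun ω => X ω * B.indicator 1 ω) → Y ∈ A) ∧
    (SurplusInvariant μ A ↔ ∀ X ∈ A, X ⊓ 0 ∈ A) ∧
    (SurplusInvariant μ A → (0 : Lp ℝ ⊤ μ) ∈ A) := by
  have hup := hA.isUpperSet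
  have hac : SurplusInvariant μ A ↔ ∀ X ∈ A, X ⊓ 0 ∈ A :=
    ⟨fun hs _ hX => hs.inf_zero_mem hX, surplusInvariant_of_inf_zero_mem hup⟩
  refine ⟨?_, hac, fun hs => hs.zero_mem hup hA.1⟩
  rw [hac]
  constructor
  · intro hc X hX B _ Y hY
    exact hup (inf_zero_le_of_ae_eq_mul_indicator hY) (hc X hX)
  · intro hb X hX
    have hB : MeasurableSet {x | X x ≤ 0} :=
      measurableSet_le (Lp.stronglyMeasurable X).measurable measurable_const
    exact hb X hX _ hB _ (inf_zero_ae_eq_mul_indicator_nonpos X)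

theorem surplus_invariance_characterization
    (μ : Measure Ω) [IsProbabilityMeasure μ] (A : Set (Lp ℝ ⊤ μ))
    (hA : IsAcceptanceSet μ A) :
    (SurplusInvariant μ A ↔
       ∀ X ∈ A, ∀ B : Set Ω, MeasurableSet B →
         ∀ Y : Lp ℝ ⊤ μ, (⇑Y =ᵐ[μ] fun ω => X ω * B.indicator 1 ω) → Y ∈ A) ∧
    (SurplusInvariant μ A ↔ ∀ X ∈ A, X ⊓ 0 ∈ A) ∧
    (SurplusInvariant μ A → (0 : Lp ℝ ⊤ μ) ∈ A) :=
  surplus_invariance_characterization_general μ A hA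
end

section
/- Let B ∈ F with P(B) > 0 and V ∈ L^∞, and define SPAN(B,V) := {X ∈ L^∞ : X·1_B ≥ V·1_B a.s.}. Then SPAN(B,V) is a closed convex acceptance set, and it is surplus invariant if and only if V·1_B ≤ 0 a.s. -/
open MeasureTheory

variable {Ω : Type*} [MeasurableSpace Ω]

/-- The SPAN-type acceptance set `SPAN(B,V) = {X : X·1_B ≥ V·1_B a.s.}`. -/
def SPANV (μ : Measure Ω) (B : Set Ω) (V : Lp ℝ ⊤ μ) : Set (Lp ℝ ⊤ μ) :=
  {X | ∀ᵐ ω ∂μ, ω ∈ B → V ω ≤ X ω}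

/-!
On `B` the set `SPAN(B,V)` is cut out by the pointwise constraint `V ≤ X`, so it is
upward closed and convex, and it is closed because `L^∞`-convergence gives a.e. convergence
along a subsequence. Surplus invariance of an upward-closed set amounts to stability under
`X ↦ X ⊓ 0 = -X⁻`; since `SPAN(B,V)` is stable under `⊓`, this means `0 ∈ SPAN(B,V)`,
that is `V ≤ 0` a.e. on `B`.
-/

open Filter

namespace MeasureTheory

variable {μ : Measure Ω}

theorem Lp.isClosed_setOf_ae_le_on {p : ENNReal} [Fact (1 ≤ p)] (B : Set Ω) (g : Ω → ℝ) :
    IsClosed {X : Lp ℝ p μ | ∀ᵐ ω ∂μ, ω ∈ B → g ω ≤ X ω} := by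
  refine IsSeqClosed.isClosed fun f X hf hfX => ?_
  obtain ⟨ns, -, hns⟩ := (tendstoInMeasure_of_tendsto_Lp hfX).exists_seq_tendsto_ae
  filter_upwards [hns, ae_all_iff.2 hf] with ω hlim hall hω
  exact ge_of_tendsto' hlim fun i => hall (ns i) hω

theorem surplusInvariant_iff_inf_zero_mem {A : Set (Lp ℝ ⊤ μ)}
    (hA : ∀ X ∈ A, ∀ Y, X ≤ Y → Y ∈ A) :
    SurplusInvariant μ A ↔ ∀ X ∈ A, X ⊓ 0 ∈ A := by
  constructor
  · intro hSI X hX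
    refine hSI X hX _ ?_
    rw [neg_inf, neg_zero, sup_assoc, sup_idem]
  · intro hinf X hX Y hXY
    have hYX : Y ⊓ 0 = X ⊓ 0 := by
      simpa only [neg_sup, neg_neg, neg_zero] using congrArg Neg.neg hXY
    exact hA _ (hYX ▸ hinf X hX) Y inf_le_left

end MeasureTheory

section SPANV

variable {μ : Measure Ω} {B : Set Ω} {V : Lp ℝ ⊤ μ}

theorem mem_SPANV {X : Lp ℝ ⊤ μ} : X ∈ SPANV μ B V ↔ ∀ᵐ ω ∂μ, ω ∈ B → V ω ≤ X ω :=
  Iff.rfl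

theorem self_mem_SPANV : V ∈ SPANV μ B V :=
  mem_SPANV.2 <| Eventually.of_forall fun _ _ => le_rfl

theorem SPANV_upward_closed {X Y : Lp ℝ ⊤ μ} (hX : X ∈ SPANV μ B V) (hXY : X ≤ Y) :
    Y ∈ SPANV μ B V := by
  filter_upwards [hX, (Lp.coeFn_le X Y).2 hXY] with ω hVX hXY hω
  exact (hVX hω).trans hXY

theorem SPANV_ne_univ [IsFiniteMeasure μ] (hB : μ B ≠ 0) : SPANV μ B V ≠ Set.univ := by
  intro h
  have hmem : V - Lp.const ⊤ μ (1 : ℝ) ∈ SPANV μ B V := h ▸ Set.mem_univ _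
  refine hB (measure_eq_zero_iff_ae_notMem.2 ?_)
  filter_upwards [hmem, Lp.coeFn_sub V (Lp.const ⊤ μ (1 : ℝ)), Lp.coeFn_const (p := ⊤) (μ := μ)
    (1 : ℝ)] with ω hV hsub hone hω
  have hle := hV hω
  simp only [hsub, Pi.sub_apply, hone, Function.const_apply] at hle
  linarith

theorem isAcceptanceSet_SPANV [IsFiniteMeasure μ] (hB : μ B ≠ 0) :
    IsAcceptanceSet μ (SPANV μ B V) :=
  ⟨⟨V, self_mem_SPANV⟩, SPANV_ne_univ hB, fun _ hX _ hXY => SPANV_upward_closed hX hXY⟩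

theorem convex_SPANV : Convex ℝ (SPANV μ B V) := by
  intro X hX Y hY a b ha hb hab
  filter_upwards [hX, hY, Lp.coeFn_add (a • X) (b • Y), Lp.coeFn_smul a X,
    Lp.coeFn_smul b Y] with ω hVX hVY hadd hsmulX hsmulY hω
  simp only [hadd, Pi.add_apply, hsmulX, hsmulY, Pi.smul_apply, smul_eq_mul]
  calc V ω = a * V ω + b * V ω := by rw [← add_mul, hab, one_mul]
    _ ≤ a * X ω + b * Y ω := by
      gcongr
      exacts [hVX hω, hVY hω]

theorem isClosed_SPANV : IsClosed (SPANV μ B V) :=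
  Lp.isClosed_setOf_ae_le_on B V

theorem inf_mem_SPANV_iff {X Y : Lp ℝ ⊤ μ} :
    X ⊓ Y ∈ SPANV μ B V ↔ X ∈ SPANV μ B V ∧ Y ∈ SPANV μ B V := by
  simp only [mem_SPANV, ← eventually_and]
  refine eventually_congr ?_
  filter_upwards [Lp.coeFn_inf X Y] with ω hinf
  simp only [hinf, Pi.inf_apply, le_inf_iff, imp_and]

theorem zero_mem_SPANV_iff : (0 : Lp ℝ ⊤ μ) ∈ SPANV μ B V ↔ ∀ᵐ ω ∂μ, ω ∈ B → V ω ≤ 0 := by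
  refine mem_SPANV.trans (eventually_congr ?_)
  filter_upwards [Lp.coeFn_zero ℝ ⊤ μ] with ω hzero
  rw [hzero, Pi.zero_apply]

theorem surplusInvariant_SPANV_iff :
    SurplusInvariant μ (SPANV μ B V) ↔ ∀ᵐ ω ∂μ, ω ∈ B → V ω ≤ 0 := by
  rw [surplusInvariant_iff_inf_zero_mem fun _ hX _ => SPANV_upward_closed hX, ← zero_mem_SPANV_iff]
  simp only [inf_mem_SPANV_iff]
  exact ⟨fun h => (h V self_mem_SPANV).2, fun h X hX => ⟨hX, h⟩⟩

end SPANV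

theorem SPANV_closed_convex_and_surplusInvariant_iff_general
    (μ : Measure Ω) [IsProbabilityMeasure μ] (B : Set Ω)
    (hBpos : 0 < μ B) (V : Lp ℝ ⊤ μ) :
    IsAcceptanceSet μ (SPANV μ B V) ∧
    Convex ℝ (SPANV μ B V) ∧
    IsClosed (SPANV μ B V) ∧
    (SurplusInvariant μ (SPANV μ B V) ↔ ∀ᵐ ω ∂μ, ω ∈ B → V ω ≤ 0) :=
  ⟨isAcceptanceSet_SPANV hBpos.ne', convex_SPANV, isClosed_SPANV, surplusInvariant_SPANV_iff⟩

theorem SPANV_closed_convex_and_surplusInvariant_iff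
    (μ : Measure Ω) [IsProbabilityMeasure μ] (B : Set Ω)
    (hB : MeasurableSet B) (hBpos : 0 < μ B) (V : Lp ℝ ⊤ μ) :
    IsAcceptanceSet μ (SPANV μ B V) ∧
    Convex ℝ (SPANV μ B V) ∧
    IsClosed (SPANV μ B V) ∧
    (SurplusInvariant μ (SPANV μ B V) ↔ ∀ᵐ ω ∂μ, ω ∈ B → V ω ≤ 0) :=
  SPANV_closed_convex_and_surplusInvariant_iff_general μ B hBpos V
end

section
/- The only sensitive, surplus-invariant acceptance set in L^∞ is the positive cone L^∞₊ = {X ∈ L^∞ : X ≥ 0 a.s.}. -/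
open MeasureTheory

variable {Ω : Type*} [MeasurableSpace Ω]

/-!
If `X` is accepted, surplus invariance accepts `-X⁻ ≤ 0`, and sensitivity forces `-X⁻ = 0`.
Hence every accepted position is nonnegative and `0` is accepted, so upward closure gives
the whole positive cone.
-/

namespace SurplusInvariant

variable {μ : Measure Ω} {A : Set (Lp ℝ ⊤ μ)}

theorem neg_negPart_mem (hsi : SurplusInvariant μ A) {X : Lp ℝ ⊤ μ} (hX : X ∈ A) :
    -X⁻ ∈ A :=
  hsi X hX _ (by rw [neg_neg, sup_eq_left.2 (negPart_nonneg X), negPart_def])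

theorem negPart_eq_zero_of_mem (hsi : SurplusInvariant μ A)
    (hsens : ∀ X : Lp ℝ ⊤ μ, X ≤ 0 → X ≠ 0 → X ∉ A) {X : Lp ℝ ⊤ μ} (hX : X ∈ A) :
    X⁻ = 0 := by
  by_contra h
  exact hsens _ (neg_nonpos.2 (negPart_nonneg X)) (neg_ne_zero.2 h) (hsi.neg_negPart_mem hX)

theorem nonneg_of_mem (hsi : SurplusInvariant μ A)
    (hsens : ∀ X : Lp ℝ ⊤ μ, X ≤ 0 → X ≠ 0 → X ∉ A) {X : Lp ℝ ⊤ μ} (hX : X ∈ A) :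
    0 ≤ X :=
  negPart_eq_zero.1 (hsi.negPart_eq_zero_of_mem hsens hX)

theorem zero_mem_s5 (hsi : SurplusInvariant μ A)
    (hsens : ∀ X : Lp ℝ ⊤ μ, X ≤ 0 → X ≠ 0 → X ∉ A) (hne : A.Nonempty) :
    (0 : Lp ℝ ⊤ μ) ∈ A := by
  obtain ⟨X, hX⟩ := hne
  have h := hsi.neg_negPart_mem hX
  rwa [hsi.negPart_eq_zero_of_mem hsens hX, neg_zero] at h

end SurplusInvariant

theorem sensitive_surplusInvariant_is_positive_cone_general
    (μ : Measure Ω)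
    (A : Set (Lp ℝ ⊤ μ)) (hA : IsAcceptanceSet μ A)
    (hsi : SurplusInvariant μ A)
    (hsens : ∀ X : Lp ℝ ⊤ μ, X ≤ 0 → X ≠ 0 → X ∉ A) :
    A = {X : Lp ℝ ⊤ μ | 0 ≤ X} := by
  obtain ⟨hne, -, hup⟩ := hA
  have h0 : (0 : Lp ℝ ⊤ μ) ∈ A := hsi.zero_mem_s5 hsens hne
  exact Set.Subset.antisymm (fun _ => hsi.nonneg_of_mem hsens) (fun X => hup 0 h0 X)

theorem sensitive_surplusInvariant_is_positive_cone
    (μ : Measure Ω) [IsProbabilityMeasure μ]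
    (A : Set (Lp ℝ ⊤ μ)) (hA : IsAcceptanceSet μ A)
    (hsi : SurplusInvariant μ A)
    (hsens : ∀ X : Lp ℝ ⊤ μ, X ≤ 0 → X ≠ 0 → X ∉ A) :
    A = {X : Lp ℝ ⊤ μ | 0 ≤ X} :=
  sensitive_surplusInvariant_is_positive_cone_general μ A hA hsi hsens
end

section
/- Let B ∈ F with 0 < P(B) < 1, ε, γ > 0, and X := -ε·1_B + γ·1_{B^c}. Fix α with P(B) < α < 1. Then TVaR_α(X) = (ε/α)·P(B) + γ·(P(B)/α − 1) and TVaR_α(-X⁻) = (ε/α)·P(B) > 0. In particular, for γ sufficiently large, X is acceptable under the TVaR_α acceptance set while -X⁻ is not, so the TVaR_α acceptance set is not surplus invariant. -/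
open scoped Classical

open MeasureTheory

variable {Ω : Type*} [MeasurableSpace Ω]

/-- Value-at-Risk at level `β`: `VaR_β(X) = inf {m : P(X + m < 0) ≤ β}`. -/
noncomputable def VaR (μ : Measure Ω) (β : ℝ) (X : Ω → ℝ) : ℝ :=
  sInf {m : ℝ | (μ {ω | X ω + m < 0}).toReal ≤ β}

/-- Tail Value-at-Risk at level `α`: `TVaR_α(X) = (1/α) ∫₀^α VaR_β(X) dβ`. -/
noncomputable def TVaR (μ : Measure Ω) (α : ℝ) (X : Ω → ℝ) : ℝ :=
  (1 / α) * ∫ β in (0:ℝ)..α, VaR μ β X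

/-!
For a two-point position `X = a` on `B`, `X = b` off `B` with `a ≤ b`, the loss probability
`P(X + m < 0)` is a step function of `m`, so `VaR_β(X)` equals `-a` for `β < P(B)` and `-b` for
`β ≥ P(B)`. Integrating, `TVaR_α(X) = -(a P(B) + b (α - P(B))) / α` whenever `P(B) ≤ α < 1`.
With `a = -ε`, the gain `γ` off `B` enters with the negative weight `P(B)/α - 1`, so a large `γ`
makes `X` acceptable, whereas `-X⁻` has `b = 0` and keeps the positive value `ε P(B) / α`.
-/

lemma VaR_eq_of_forall_iff {μ : Measure Ω} {β c : ℝ} {X : Ω → ℝ}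
    (h : ∀ m, (μ {ω | X ω + m < 0}).toReal ≤ β ↔ c ≤ m) : VaR μ β X = c := by
  rw [VaR, show {m : ℝ | (μ {ω | X ω + m < 0}).toReal ≤ β} = Set.Ici c from Set.ext h,
    csInf_Ici]

section TwoPoint

variable (μ : Measure Ω) [IsProbabilityMeasure μ] (B : Set Ω) {a b : ℝ}

lemma toReal_measure_ite_add_lt_zero (hab : a ≤ b) (m : ℝ) :
    (μ {ω | (if ω ∈ B then a else b) + m < 0}).toReal
      = if m < -b then 1 else if m < -a then (μ B).toReal else 0 := by
  have hset : ∀ S : Set Ω, (∀ ω, ((if ω ∈ B then a else b) + m < 0 ↔ ω ∈ S)) →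
      {ω | (if ω ∈ B then a else b) + m < 0} = S := fun S hS => Set.ext hS
  split_ifs with hb ha
  · rw [hset Set.univ fun ω => by split_ifs <;> simp <;> linarith, measure_univ,
      ENNReal.toReal_one]
  · rw [hset B fun ω => by split_ifs with hω <;> simp [hω] <;> linarith]
  · rw [hset ∅ fun ω => by split_ifs <;> simp <;> linarith, measure_empty,
      ENNReal.toReal_zero]

lemma VaR_ite (hab : a ≤ b) {β : ℝ} (hβ0 : 0 ≤ β) (hβ1 : β < 1) :
    VaR μ β (fun ω => if ω ∈ B then a else b) = if β < (μ B).toReal then -a else -b := by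
  apply VaR_eq_of_forall_iff
  intro m
  have hp1 : (μ B).toReal ≤ 1 := measureReal_le_one
  rw [toReal_measure_ite_add_lt_zero μ B hab]
  split_ifs <;> constructor <;> intro <;> linarith

lemma TVaR_ite (hab : a ≤ b) {α : ℝ} (hα0 : 0 < α) (hpα : (μ B).toReal ≤ α) (hα1 : α < 1) :
    TVaR μ α (fun ω => if ω ∈ B then a else b)
      = -(a * (μ B).toReal + b * (α - (μ B).toReal)) / α := by
  set p := (μ B).toReal
  -- `integral_indicator` wants `Iic p`, whereas `VaR` jumps on `Iio p`: they differ only at `p`.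
  have hVaR : ∀ᵐ β, β ∈ Set.uIoc 0 α → VaR μ β (fun ω => if ω ∈ B then a else b)
      = {x | x ≤ p}.indicator (fun _ => b - a) β - b := by
    filter_upwards [measure_eq_zero_iff_ae_notMem.mp (Real.volume_singleton (a := p))]
      with β hβne hβ
    rw [Set.uIoc_of_le hα0.le] at hβ
    rw [VaR_ite μ B hab hβ.1.le (hβ.2.trans_lt hα1)]
    by_cases hlt : β < p
    · rw [if_pos hlt, Set.indicator_of_mem (s := {x | x ≤ p}) hlt.le]
      ring
    · have hnle : ¬ β ≤ p := fun hle => hβne (hle.antisymm (not_lt.mp hlt))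
      rw [if_neg hlt, Set.indicator_of_notMem (s := {x | x ≤ p}) hnle]
      ring
  have hind : IntervalIntegrable ({x | x ≤ p}.indicator fun _ => b - a) volume 0 α := by
    rw [intervalIntegrable_iff]
    exact (integrableOn_const measure_Ioc_lt_top.ne).indicator measurableSet_Iic
  rw [TVaR, intervalIntegral.integral_congr_ae hVaR, intervalIntegral.integral_sub hind
    intervalIntegrable_const, intervalIntegral.integral_indicator ⟨ENNReal.toReal_nonneg, hpα⟩]
  simp only [intervalIntegral.integral_const, smul_eq_mul, sub_zero]
  field_simp
  ring

end TwoPoint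

theorem TVaR_not_surplus_invariant_general
    (μ : Measure Ω) [IsProbabilityMeasure μ]
    (B : Set Ω) (hB0 : 0 < μ B)
    (ε γ : ℝ) (hε : 0 < ε) (hγ : 0 < γ)
    (α : ℝ) (hα1 : (μ B).toReal < α) (hα2 : α < 1)
    (X : Ω → ℝ) (hX : X = fun ω => if ω ∈ B then -ε else γ) :
    TVaR μ α X = ε / α * (μ B).toReal + γ * ((μ B).toReal / α - 1) ∧
    TVaR μ α (fun ω => min (X ω) 0) = ε / α * (μ B).toReal ∧
    0 < ε / α * (μ B).toReal ∧
    (∃ γ₀ : ℝ, ∀ γ' ≥ γ₀,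
      TVaR μ α (fun ω => if ω ∈ B then -ε else γ') ≤ 0) := by
  set p := (μ B).toReal
  have hp0 : 0 < p := ENNReal.toReal_pos hB0.ne' (measure_ne_top μ B)
  have hα0 : 0 < α := hp0.trans hα1
  have hTVaR : ∀ γ' ≥ 0, TVaR μ α (fun ω => if ω ∈ B then -ε else γ')
      = ε / α * p + γ' * (p / α - 1) := fun γ' hγ' => by
    rw [TVaR_ite μ B (by linarith) hα0 hα1.le hα2]
    field_simp
    ring
  have hXneg : (fun ω => min (X ω) 0) = fun ω => if ω ∈ B then -ε else 0 := by
    funext ω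
    split_ifs <;> simp [*, hε.le, hγ.le]
  refine ⟨hX ▸ hTVaR γ hγ.le, ?_, by positivity, ⟨ε * p / (α - p), fun γ' hγ' => ?_⟩⟩
  · rw [hXneg, hTVaR 0 le_rfl]
    ring
  · have hαp : 0 < α - p := sub_pos.mpr hα1
    have hεp : ε * p ≤ γ' * (α - p) := (div_le_iff₀ hαp).mp hγ'
    rw [hTVaR γ' ((div_nonneg (by positivity) hαp.le).trans hγ')]
    calc ε / α * p + γ' * (p / α - 1) = (ε * p - γ' * (α - p)) / α := by field_simp; ring
      _ ≤ 0 := div_nonpos_of_nonpos_of_nonneg (by linarith) hα0.le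

theorem TVaR_not_surplus_invariant
    (μ : Measure Ω) [IsProbabilityMeasure μ]
    (B : Set Ω) (hB : MeasurableSet B) (hB0 : 0 < μ B) (hB1 : μ B < 1)
    (ε γ : ℝ) (hε : 0 < ε) (hγ : 0 < γ)
    (α : ℝ) (hα1 : (μ B).toReal < α) (hα2 : α < 1)
    (X : Ω → ℝ) (hX : X = fun ω => if ω ∈ B then -ε else γ) :
    TVaR μ α X = ε / α * (μ B).toReal + γ * ((μ B).toReal / α - 1) ∧
    TVaR μ α (fun ω => min (X ω) 0) = ε / α * (μ B).toReal ∧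
    0 < ε / α * (μ B).toReal ∧
    (∃ γ₀ : ℝ, ∀ γ' ≥ γ₀,
      TVaR μ α (fun ω => if ω ∈ B then -ε else γ') ≤ 0) :=
  TVaR_not_surplus_invariant_general μ B hB0 ε γ hε hγ α hα1 hα2 X hX
end

section
/- Let A ⊂ L^∞ be a surplus-invariant acceptance set and S = (S₀, S_T) a traded asset with S₀ > 0 and 0 ≤ S_T ∈ L^∞, S_T ≠ 0. Then the risk measure ρ_{A,S}(X) := inf{m ∈ ℝ : X + (m/S₀)·S_T ∈ A} is surplus invariant: ρ_{A,S}(X) = ρ_{A,S}(-X⁻) for every X ∈ L^∞ with ρ_{A,S}(X) ≥ 0. -/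
open MeasureTheory

variable {Ω : Type*} [MeasurableSpace Ω]

/-- The risk measure `ρ_{A,S}(X) = inf {m : X + (m/S₀)·S_T ∈ A}`, valued in
`[-∞,∞]` (the infimum over the empty set is `+∞`). -/
noncomputable def rhoAS (μ : Measure Ω) (A : Set (Lp ℝ ⊤ μ))
    (S0 : ℝ) (ST : Lp ℝ ⊤ μ) (X : Lp ℝ ⊤ μ) : EReal :=
  sInf ((fun m : ℝ => (m : EReal)) '' {m : ℝ | X + (m / S0) • ST ∈ A})

/-!
Only nonnegative amounts `m` can make `X` acceptable when `ρ_{A,S}(X) ≥ 0`, and adding the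
nonnegative payoff `(m/S₀)·S_T` to `X` or to `X ∧ 0` gives positions with the same negative part.
So surplus invariance and monotonicity of `A` show that both positions are accepted for exactly
the same amounts `m`, and the two infima coincide.
-/

theorem negPart_inf_zero_add {G : Type*} [Lattice G] [AddCommGroup G] [IsOrderedAddMonoid G]
    (a : G) {s : G} (hs : 0 ≤ s) : (a ⊓ 0 + s)⁻ = (a + s)⁻ := by
  have h : (a ⊓ 0 + s) ⊓ 0 = (a + s) ⊓ 0 := by
    rw [inf_add, zero_add, inf_assoc, inf_eq_right.mpr hs]
  simpa only [negPart_def, neg_inf, neg_zero] using congrArg Neg.neg h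

theorem Lp.smul_nonneg {p : ENNReal} {μ : Measure Ω} {c : ℝ} (hc : 0 ≤ c) {f : Lp ℝ p μ}
    (hf : 0 ≤ f) : 0 ≤ c • f := by
  rw [← Lp.coeFn_nonneg] at hf ⊢
  filter_upwards [Lp.coeFn_smul c f, hf] with ω hsmul hfω
  rw [hsmul]
  exact mul_nonneg hc hfω

theorem SurplusInvariant.add_mem_iff_inf_zero_add_mem {μ : Measure Ω} {A : Set (Lp ℝ ⊤ μ)}
    (hsi : SurplusInvariant μ A) (hmono : ∀ X ∈ A, ∀ Y : Lp ℝ ⊤ μ, X ≤ Y → Y ∈ A)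
    (X : Lp ℝ ⊤ μ) {S : Lp ℝ ⊤ μ} (hS : 0 ≤ S) :
    X + S ∈ A ↔ X ⊓ 0 + S ∈ A := by
  constructor
  · intro h
    refine hsi _ h _ ?_
    simpa only [negPart_def] using negPart_inf_zero_add X hS
  · intro h
    exact hmono _ h _ (add_le_add_left inf_le_left _)

theorem rhoAS_surplus_invariant_general
    (μ : Measure Ω)
    (A : Set (Lp ℝ ⊤ μ)) (hA : IsAcceptanceSet μ A) (hsi : SurplusInvariant μ A)
    (S0 : ℝ) (hS0 : 0 < S0) (ST : Lp ℝ ⊤ μ) (hST : 0 ≤ ST)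
    (X : Lp ℝ ⊤ μ) (hX : 0 ≤ rhoAS μ A S0 ST X) :
    rhoAS μ A S0 ST X = rhoAS μ A S0 ST (X ⊓ 0) := by
  have hset : {m : ℝ | X + (m / S0) • ST ∈ A} = {m : ℝ | X ⊓ 0 + (m / S0) • ST ∈ A} := by
    ext m
    constructor
    · intro hm
      have hm0 : (0 : ℝ) ≤ m := by
        exact_mod_cast hX.trans (sInf_le ⟨m, hm, rfl⟩ : rhoAS μ A S0 ST X ≤ m)
      have hpay : 0 ≤ (m / S0) • ST := Lp.smul_nonneg (div_nonneg hm0 hS0.le) hST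
      exact (hsi.add_mem_iff_inf_zero_add_mem hA.2.2 X hpay).mp hm
    · intro hm
      exact hA.2.2 _ hm _ (add_le_add_left inf_le_left _)
  rw [rhoAS, rhoAS, hset]

theorem rhoAS_surplus_invariant
    (μ : Measure Ω) [IsProbabilityMeasure μ]
    (A : Set (Lp ℝ ⊤ μ)) (hA : IsAcceptanceSet μ A) (hsi : SurplusInvariant μ A)
    (S0 : ℝ) (hS0 : 0 < S0) (ST : Lp ℝ ⊤ μ) (hST : 0 ≤ ST) (hSTne : ST ≠ 0)
    (X : Lp ℝ ⊤ μ) (hX : 0 ≤ rhoAS μ A S0 ST X) :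
    rhoAS μ A S0 ST X = rhoAS μ A S0 ST (X ⊓ 0) :=
  rhoAS_surplus_invariant_general μ A hA hsi S0 hS0 ST hST X hX
end

section
/- An acceptance set A ⊂ ℝ^N (with the componentwise order) is surplus invariant if and only if for every x ∈ A and every choice of signs δ ∈ {0,1}^N, the vector (δ₁x₁, …, δ_N x_N) belongs to A. -/
/-!
Both conditions are equivalent, for an upward closed set, to `x ⊓ 0 ∈ A` for every `x ∈ A`.
Indeed `x ⊓ 0 = -x⁻` has the same negative part as `x`, it lies below every `y` with `y⁻ = x⁻`
and below every `δ x` with `δ ∈ {0,1}^N`, and it is itself `δ x` for `δ` the indicator of `{x < 0}`.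
-/

/-- An acceptance set in `ℝ^N` (componentwise order): nonempty, proper, upward closed. -/
def IsAcceptanceSetFin {N : ℕ} (A : Set (Fin N → ℝ)) : Prop :=
  A.Nonempty ∧ A ≠ Set.univ ∧ ∀ x ∈ A, ∀ y : Fin N → ℝ, x ≤ y → y ∈ A

/-- Surplus invariance in `ℝ^N`: `x ∈ A` and `y⁻ = x⁻` (componentwise) imply `y ∈ A`. -/
def SurplusInvariantFin {N : ℕ} (A : Set (Fin N → ℝ)) : Prop :=
  ∀ x ∈ A, ∀ y : Fin N → ℝ, (fun i => max (-(y i)) 0) = (fun i => max (-(x i)) 0) → y ∈ A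

lemma max_neg_zero_eq_max_neg_zero_iff {a b : ℝ} :
    max (-a) 0 = max (-b) 0 ↔ min a 0 = min b 0 := by
  have neg_min_zero (c : ℝ) : max (-c) 0 = -min c 0 := by rw [← max_neg_neg, neg_zero]
  rw [neg_min_zero, neg_min_zero, neg_inj]

section Pointwise

variable {ι : Type*}

lemma inf_zero_le_of_max_neg_zero_eq {x y : ι → ℝ}
    (h : (fun i => max (-(y i)) 0) = (fun i => max (-(x i)) 0)) : x ⊓ 0 ≤ y := fun i => by
  have hi : min (y i) 0 = min (x i) 0 := max_neg_zero_eq_max_neg_zero_iff.1 (congrFun h i)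
  calc (x ⊓ 0) i = min (y i) 0 := hi.symm
    _ ≤ y i := min_le_left _ _

lemma max_neg_zero_inf_zero (x : ι → ℝ) :
    (fun i => max (-((x ⊓ 0) i)) 0) = (fun i => max (-(x i)) 0) :=
  funext fun _ => max_neg_zero_eq_max_neg_zero_iff.2 (min_eq_left (min_le_right _ _))

lemma inf_zero_le_mul {δ : ι → ℝ} (hδ : ∀ i, δ i = 0 ∨ δ i = 1) (x : ι → ℝ) :
    x ⊓ 0 ≤ fun i => δ i * x i := fun i => by
  rcases hδ i with h | h <;> simp [h]

lemma inf_zero_eq_indicator_mul (x : ι → ℝ) :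
    x ⊓ 0 = fun i => (if x i < 0 then 1 else 0) * x i := funext fun i => by
  by_cases hi : x i < 0
  · simp [hi, hi.le]
  · simp [hi, not_lt.1 hi]

lemma forall_mul_mem_iff_forall_inf_zero_mem {A : Set (ι → ℝ)} (hA : IsUpperSet A) :
    (∀ x ∈ A, ∀ δ : ι → ℝ, (∀ i, δ i = 0 ∨ δ i = 1) → (fun i => δ i * x i) ∈ A) ↔
      ∀ x ∈ A, x ⊓ 0 ∈ A := by
  refine ⟨fun h x hx => ?_, fun h x hx δ hδ => hA (inf_zero_le_mul hδ x) (h x hx)⟩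
  rw [inf_zero_eq_indicator_mul]
  exact h x hx _ fun i => by split_ifs <;> simp

end Pointwise

lemma IsAcceptanceSetFin.isUpperSet {N : ℕ} {A : Set (Fin N → ℝ)} (hA : IsAcceptanceSetFin A) :
    IsUpperSet A :=
  fun x y hxy hx => hA.2.2 x hx y hxy

lemma surplusInvariantFin_iff_forall_inf_zero_mem {N : ℕ} {A : Set (Fin N → ℝ)}
    (hA : IsUpperSet A) : SurplusInvariantFin A ↔ ∀ x ∈ A, x ⊓ 0 ∈ A :=
  ⟨fun h x hx => h x hx _ (max_neg_zero_inf_zero x),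
    fun h x hx _ hy => hA (inf_zero_le_of_max_neg_zero_eq hy) (h x hx)⟩

theorem surplusInvariantFin_iff
    {N : ℕ} (A : Set (Fin N → ℝ)) (hA : IsAcceptanceSetFin A) :
    SurplusInvariantFin A ↔
      ∀ x ∈ A, ∀ δ : Fin N → ℝ, (∀ i, δ i = 0 ∨ δ i = 1) →
        (fun i => δ i * x i) ∈ A := by
  rw [surplusInvariantFin_iff_forall_inf_zero_mem hA.isUpperSet,
    forall_mul_mem_iff_forall_inf_zero_mem hA.isUpperSet]
end

section
/- Let A ⊂ ℝ^N be a closed, convex, surplus-invariant acceptance set and set v_j := inf_{x ∈ A} x_j. If v_{j₁} = … = v_{j_R} = -∞ for distinct indices j₁,…,j_R, then Σ_{i=1}^R x_{j_i} e_{j_i} ∈ A for all real numbers x_{j₁},…,x_{j_R}, where e_j are the standard basis vectors. -/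
/-!
Surplus invariance lets us replace every `x ∈ A` by `x ⊓ 0 = -x⁻ ∈ A`, so the nonpositive part
`A ∩ Iic 0` of `A` is a convex set which is still unbounded below in each coordinate `j i`.
The midpoint of two nonpositive points lies below half of each of them, so an induction on the
coordinates yields a single nonpositive point of `A` lying below any prescribed values on all the
`j i` at once; upward closedness then puts every `y` supported on the range of `j` in `A`.
-/

theorem Convex.exists_forall_lt_of_nonpos {ι : Type*} {B : Set (ι → ℝ)} (hB : Convex ℝ B)
    (hne : B.Nonempty) (hnonpos : ∀ x ∈ B, x ≤ 0) (S : Finset ι)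
    (hS : ∀ k ∈ S, ∀ c : ℝ, ∃ x ∈ B, x k < c) (c : ι → ℝ) :
    ∃ x ∈ B, ∀ k ∈ S, x k < c k := by
  classical
  induction S using Finset.induction_on generalizing c with
  | empty => exact ⟨hne.some, hne.some_mem, by simp⟩
  | insert a S _ ih =>
    obtain ⟨x, hxB, hx⟩ := ih (fun k hk => hS k (Finset.mem_insert_of_mem hk)) (fun k => 2 * c k)
    obtain ⟨z, hzB, hz⟩ := hS a (Finset.mem_insert_self a S) (2 * c a)
    refine ⟨(1 / 2 : ℝ) • x + (1 / 2 : ℝ) • z, hB hxB hzB (by norm_num) (by norm_num)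
      (by norm_num), fun k hk => ?_⟩
    have hx0 : x k ≤ 0 := hnonpos x hxB k
    have hz0 : z k ≤ 0 := hnonpos z hzB k
    simp only [Pi.add_apply, Pi.smul_apply, smul_eq_mul]
    rcases Finset.mem_insert.mp hk with rfl | hk
    · linarith
    · linarith [hx k hk]

theorem SurplusInvariantFin.inf_zero_mem {N : ℕ} {A : Set (Fin N → ℝ)}
    (hsi : SurplusInvariantFin A) {x : Fin N → ℝ} (hx : x ∈ A) : x ⊓ 0 ∈ A := by
  refine hsi x hx _ (funext fun k => ?_)
  simp only [Pi.inf_apply, Pi.zero_apply]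
  rcases le_total (x k) 0 with h | h <;> simp [h]

theorem unbounded_components_general
    {N : ℕ} (A : Set (Fin N → ℝ)) (hA : IsAcceptanceSetFin A)
    (hconv : Convex ℝ A) (hsi : SurplusInvariantFin A)
    (R : ℕ) (j : Fin R → Fin N)
    (hunb : ∀ i : Fin R, ∀ c : ℝ, ∃ x ∈ A, x (j i) < c)
    (y : Fin N → ℝ)
    (hy2 : ∀ k : Fin N, k ∉ Set.range j → y k = 0) :
    y ∈ A := by
  obtain ⟨⟨a, ha⟩, -, hup⟩ := hA
  have hnonpos_unb : ∀ k ∈ Finset.univ.image j, ∀ c : ℝ, ∃ x ∈ A ∩ Set.Iic 0, x k < c := by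
    simp only [Finset.mem_image, Finset.mem_univ, true_and, forall_exists_index]
    rintro _ i rfl c
    obtain ⟨x, hx, hxc⟩ := hunb i c
    exact ⟨x ⊓ 0, ⟨hsi.inf_zero_mem hx, fun _ => min_le_right _ _⟩,
      (min_le_left (x (j i)) 0).trans_lt hxc⟩
  obtain ⟨x, ⟨hxA, hx0⟩, hxy⟩ := (hconv.inter (convex_Iic 0)).exists_forall_lt_of_nonpos
    ⟨a ⊓ 0, hsi.inf_zero_mem ha, fun _ => min_le_right _ _⟩ (fun x hx => hx.2) _ hnonpos_unb y
  refine hup x hxA y fun k => ?_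
  by_cases hk : k ∈ Set.range j
  · obtain ⟨i, rfl⟩ := hk
    exact (hxy _ (Finset.mem_image_of_mem j (Finset.mem_univ i))).le
  · rw [hy2 k hk]
    exact hx0 k

theorem unbounded_components
    {N : ℕ} (A : Set (Fin N → ℝ)) (hA : IsAcceptanceSetFin A)
    (hconv : Convex ℝ A) (hcl : IsClosed A) (hsi : SurplusInvariantFin A)
    (R : ℕ) (j : Fin R → Fin N) (hj : Function.Injective j)
    (hunb : ∀ i : Fin R, ∀ c : ℝ, ∃ x ∈ A, x (j i) < c)
    (cvals : Fin R → ℝ) (y : Fin N → ℝ)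
    (hy1 : ∀ i : Fin R, y (j i) = cvals i)
    (hy2 : ∀ k : Fin N, k ∉ Set.range j → y k = 0) :
    y ∈ A :=
  unbounded_components_general A hA hconv hsi R j hunb y hy2
end

section
/- Let A ⊂ L^∞ be an acceptance set and ρ_A(X) := inf{m ∈ ℝ : X + m ∈ A} (cash-additive risk measure, finitely valued and Lipschitz). Define ρ_A^∨(X) := max(ρ_A(X), 0). Then ρ_A^∨ is surplus invariant (ρ_A^∨(X) = ρ_A^∨(-X⁻) for all X with ρ_A^∨(X) ≥ 0, equivalently for all X) if and only if the norm closure of A is surplus invariant. Moreover, if ρ_A(0) = 0, these are equivalent to ρ_A^∨ = ρ_A^∧, where ρ_A^∧(X) := ρ_A(-X⁻). -/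
open MeasureTheory

variable {Ω : Type*} [MeasurableSpace Ω]

/-- The cash-additive risk measure `ρ_A(X) = inf {m ∈ ℝ : X + m ∈ A}`. -/
noncomputable def rhoCash (μ : Measure Ω) [IsFiniteMeasure μ]
    (A : Set (Lp ℝ ⊤ μ)) (X : Lp ℝ ⊤ μ) : ℝ :=
  sInf {m : ℝ | X + Lp.const ⊤ μ m ∈ A}

/-!
Everything rests on `closure A = {X | ρ_A(X) ≤ 0}` and cash additivity. If `ρ_A^∨` is surplus
invariant and `X ∈ closure A`, then `ρ_A(Y) ≤ ρ_A(Y ∧ 0) = ρ_A(X ∧ 0) ≤ 0` whenever `Y⁻ = X⁻`.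
Conversely, with `t = ρ_A^∨(X) ≥ 0` we have `X + t ∈ closure A`, and `X ∧ 0 + t` has the same
negative part as `X + t`, so it lies in `closure A` as well, i.e. `ρ_A(X ∧ 0) ≤ t`; monotonicity
gives the reverse inequality. If `ρ_A(0) = 0`, then `ρ_A(X ∧ 0) ≥ 0`, so `ρ_A^∨(X ∧ 0) = ρ_A^∧(X)`.
-/

section

variable {μ : Measure Ω}

lemma inf_zero_add_inf_zero {G : Type*} [Lattice G] [AddGroup G] [AddRightMono G]
    (a : G) {t : G} (ht : 0 ≤ t) : (a ⊓ 0 + t) ⊓ 0 = (a + t) ⊓ 0 := by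
  rw [inf_add, zero_add, inf_assoc, inf_eq_right.mpr ht]

lemma surplusInvariant_iff_inf_zero {A : Set (Lp ℝ ⊤ μ)} :
    SurplusInvariant μ A ↔ ∀ X ∈ A, ∀ Y : Lp ℝ ⊤ μ, Y ⊓ 0 = X ⊓ 0 → Y ∈ A := by
  have neg_sup_zero : ∀ Y : Lp ℝ ⊤ μ, (-Y) ⊔ 0 = -(Y ⊓ 0) := negPart_eq_neg_inf_zero
  simp only [SurplusInvariant, neg_sup_zero, neg_inj]

namespace MeasureTheory.Lp

lemma ae_norm_le_norm_top {E : Type*} [NormedAddCommGroup E] (f : Lp E ⊤ μ) :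
    ∀ᵐ ω ∂μ, ‖f ω‖ ≤ ‖f‖ := by
  simpa only [norm_def, toReal_eLpNorm (Lp.aestronglyMeasurable f)]
    using ae_le_lpNorm_exponent_top (Lp.memLp f)

variable [IsFiniteMeasure μ]

lemma const_mono {p : ENNReal} : Monotone (Lp.const p μ : ℝ → Lp ℝ p μ) := fun a b hab => by
  rw [← Lp.coeFn_le]
  filter_upwards [Lp.coeFn_const p μ a, Lp.coeFn_const p μ b] with ω ha hb
  rw [ha, hb]
  exact hab

lemma le_const_norm (f : Lp ℝ ⊤ μ) : f ≤ Lp.const ⊤ μ ‖f‖ := by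
  rw [← Lp.coeFn_le]
  filter_upwards [Lp.coeFn_const ⊤ μ ‖f‖, ae_norm_le_norm_top f] with ω hc hf
  rw [hc]
  exact (le_abs_self (f ω)).trans hf

lemma le_add_const_norm_sub (X Y : Lp ℝ ⊤ μ) : Y ≤ X + Lp.const ⊤ μ ‖Y - X‖ := by
  simpa using add_le_add_right (le_const_norm (Y - X)) X

lemma norm_const_top_le (c : ℝ) : ‖Lp.const ⊤ μ c‖ ≤ |c| := by
  simpa using Lp.norm_const_le ⊤ μ c

end MeasureTheory.Lp

namespace IsAcceptanceSet

variable [IsFiniteMeasure μ] {A : Set (Lp ℝ ⊤ μ)} (hA : IsAcceptanceSet μ A)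
include hA

lemma nonempty_setOf_add_const_mem (X : Lp ℝ ⊤ μ) :
    {m : ℝ | X + Lp.const ⊤ μ m ∈ A}.Nonempty := by
  obtain ⟨X₀, hX₀⟩ := hA.1
  exact ⟨‖X₀ - X‖, hA.2.2 X₀ hX₀ _ (Lp.le_add_const_norm_sub X X₀)⟩

lemma bddBelow_setOf_add_const_mem (X : Lp ℝ ⊤ μ) :
    BddBelow {m : ℝ | X + Lp.const ⊤ μ m ∈ A} := by
  obtain ⟨W, hW⟩ := (Set.ne_univ_iff_exists_notMem A).mp hA.2.1
  refine ⟨-‖X - W‖, fun m hm => le_of_not_gt fun hlt => hW (hA.2.2 _ hm W ?_)⟩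
  calc X + Lp.const ⊤ μ m ≤ W + Lp.const ⊤ μ ‖X - W‖ + Lp.const ⊤ μ m :=
        add_le_add_left (Lp.le_add_const_norm_sub W X) _
    _ = W + Lp.const ⊤ μ (‖X - W‖ + m) := by rw [map_add, add_assoc]
    _ ≤ W + Lp.const ⊤ μ 0 := add_le_add_right (Lp.const_mono (by linarith)) W
    _ = W := by rw [map_zero, add_zero]

lemma rhoCash_antitone : Antitone (rhoCash μ A) := fun X Y hXY =>
  csInf_le_csInf (hA.bddBelow_setOf_add_const_mem Y) (hA.nonempty_setOf_add_const_mem X)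
    fun _ hm => hA.2.2 _ hm _ (add_le_add_left hXY _)

lemma add_const_mem_of_rhoCash_lt {X : Lp ℝ ⊤ μ} {m : ℝ} (h : rhoCash μ A X < m) :
    X + Lp.const ⊤ μ m ∈ A := by
  obtain ⟨m', hm', hlt⟩ := exists_lt_of_csInf_lt (hA.nonempty_setOf_add_const_mem X) h
  exact hA.2.2 _ hm' _ (add_le_add_right (Lp.const_mono hlt.le) X)

lemma rhoCash_nonpos_of_mem {X : Lp ℝ ⊤ μ} (hX : X ∈ A) : rhoCash μ A X ≤ 0 :=
  csInf_le (hA.bddBelow_setOf_add_const_mem X) (by simpa using hX)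

lemma rhoCash_add_const_le (X : Lp ℝ ⊤ μ) (c : ℝ) :
    rhoCash μ A (X + Lp.const ⊤ μ c) ≤ rhoCash μ A X - c := by
  rw [le_sub_iff_add_le]
  refine le_csInf (hA.nonempty_setOf_add_const_mem X) fun m hm => ?_
  rw [← le_sub_iff_add_le]
  exact csInf_le (hA.bddBelow_setOf_add_const_mem _) (by simpa [add_assoc, ← map_add] using hm)

lemma rhoCash_add_const (X : Lp ℝ ⊤ μ) (c : ℝ) :
    rhoCash μ A (X + Lp.const ⊤ μ c) = rhoCash μ A X - c := by
  refine le_antisymm (hA.rhoCash_add_const_le X c) ?_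
  have h := hA.rhoCash_add_const_le (X + Lp.const ⊤ μ c) (-c)
  rw [add_assoc, ← map_add, add_neg_cancel, map_zero, add_zero] at h
  linarith

lemma mem_closure_iff_rhoCash_nonpos {X : Lp ℝ ⊤ μ} : X ∈ closure A ↔ rhoCash μ A X ≤ 0 := by
  rw [Metric.mem_closure_iff]
  constructor
  · intro hX
    by_contra! hpos
    obtain ⟨Y, hY, hXY⟩ := hX _ hpos
    have hle := hA.rhoCash_antitone (Lp.le_add_const_norm_sub X Y)
    rw [hA.rhoCash_add_const, ← dist_eq_norm, dist_comm] at hle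
    linarith [hA.rhoCash_nonpos_of_mem hY]
  · intro hX ε hε
    refine ⟨X + Lp.const ⊤ μ (ε / 2), hA.add_const_mem_of_rhoCash_lt (by linarith), ?_⟩
    rw [dist_eq_norm, sub_add_cancel_left, norm_neg]
    exact (Lp.norm_const_top_le _).trans_lt (by rw [abs_of_pos (by linarith)]; linarith)

lemma surplusInvariant_closure_of_max_rhoCash_eq
    (h : ∀ X : Lp ℝ ⊤ μ, max (rhoCash μ A X) 0 = max (rhoCash μ A (X ⊓ 0)) 0) :
    SurplusInvariant μ (closure A) := by
  rw [surplusInvariant_iff_inf_zero]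
  intro X hX Y hYX
  rw [hA.mem_closure_iff_rhoCash_nonpos] at hX ⊢
  have hX0 : rhoCash μ A (X ⊓ 0) ≤ 0 := by
    rw [← max_eq_right_iff, ← h X, max_eq_right hX]
  calc rhoCash μ A Y ≤ rhoCash μ A (Y ⊓ 0) := hA.rhoCash_antitone inf_le_left
    _ = rhoCash μ A (X ⊓ 0) := by rw [hYX]
    _ ≤ 0 := hX0

lemma max_rhoCash_eq_of_surplusInvariant_closure (h : SurplusInvariant μ (closure A))
    (X : Lp ℝ ⊤ μ) : max (rhoCash μ A X) 0 = max (rhoCash μ A (X ⊓ 0)) 0 := by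
  set t := max (rhoCash μ A X) 0
  have ht : 0 ≤ t := le_max_right _ _
  have hXt : X + Lp.const ⊤ μ t ∈ closure A := by
    rw [hA.mem_closure_iff_rhoCash_nonpos, hA.rhoCash_add_const, sub_nonpos]
    exact le_max_left _ _
  have hX0t : X ⊓ 0 + Lp.const ⊤ μ t ∈ closure A := by
    refine surplusInvariant_iff_inf_zero.mp h _ hXt _ (inf_zero_add_inf_zero X ?_)
    simpa using Lp.const_mono (μ := μ) (p := ⊤) ht
  rw [hA.mem_closure_iff_rhoCash_nonpos, hA.rhoCash_add_const, sub_nonpos] at hX0t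
  exact le_antisymm (max_le_max (hA.rhoCash_antitone inf_le_left) le_rfl) (max_le hX0t ht)

lemma max_rhoCash_inf_zero_eq (h0 : rhoCash μ A 0 = 0) (X : Lp ℝ ⊤ μ) :
    max (rhoCash μ A (X ⊓ 0)) 0 = rhoCash μ A (X ⊓ 0) :=
  max_eq_left (h0 ▸ hA.rhoCash_antitone inf_le_right)

end IsAcceptanceSet

end

theorem truncated_rho_surplus_invariant_iff
    (μ : Measure Ω) [IsProbabilityMeasure μ]
    (A : Set (Lp ℝ ⊤ μ)) (hA : IsAcceptanceSet μ A) :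
    ((∀ X : Lp ℝ ⊤ μ, max (rhoCash μ A X) 0 = max (rhoCash μ A (X ⊓ 0)) 0) ↔
      SurplusInvariant μ (closure A)) ∧
    (rhoCash μ A 0 = 0 →
      ((∀ X : Lp ℝ ⊤ μ, max (rhoCash μ A X) 0 = max (rhoCash μ A (X ⊓ 0)) 0) ↔
        (∀ X : Lp ℝ ⊤ μ, max (rhoCash μ A X) 0 = rhoCash μ A (X ⊓ 0)))) := by
  refine ⟨⟨hA.surplusInvariant_closure_of_max_rhoCash_eq,
    hA.max_rhoCash_eq_of_surplusInvariant_closure⟩, fun h0 => ?_⟩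
  simp only [hA.max_rhoCash_inf_zero_eq h0]
end

section
/- Let ρ: L^∞ → [0,∞) be a positive (normalized, decreasing, nonnegative) surplus-invariant risk measure. Then ρ = ρ_A^∨ for some surplus-invariant acceptance set A ⊂ L^∞ (and one may take A = {X : ρ(X) = 0}) if and only if ρ is cash additive subject to positivity, i.e., ρ(X + α) = ρ(X) − α for all X ∈ L^∞ and α ∈ ℝ with ρ(X) > max(α, 0). -/
open MeasureTheory

variable {Ω : Type*} [MeasurableSpace Ω]

/-!
For the zero set `A = {ρ = 0}`, cash additivity subject to positivity gives
`ρ (X + ρ X - ε) = ε` for every small `ε > 0`, so by monotonicity `X + ρ X ∈ A`, while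
`ρ (X + m) = ρ X - m > 0` for `m < ρ X`; hence `ρ_A X = ρ X` whenever `ρ X > 0`.
Conversely, `ρ_A` is cash additive at every `X` with `ρ_A X > 0` (a genuine infimum), and the
truncation at `0` is invisible as long as `ρ X > max α 0`.
-/

def CashAdditiveSubjectToPositivity (μ : Measure Ω) [IsFiniteMeasure μ] (ρ : Lp ℝ ⊤ μ → ℝ) :
    Prop :=
  ∀ (X : Lp ℝ ⊤ μ) (α : ℝ), max α 0 < ρ X → ρ (X + Lp.const ⊤ μ α) = ρ X - α

variable {μ : Measure Ω}

section zeroSet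

variable {ρ : Lp ℝ ⊤ μ → ℝ}

theorem isAcceptanceSet_zeroSet (hmono : Antitone ρ) (hpos : ∀ X, 0 ≤ ρ X)
    (hne : {X : Lp ℝ ⊤ μ | ρ X = 0}.Nonempty) (hproper : {X : Lp ℝ ⊤ μ | ρ X = 0} ≠ Set.univ) :
    IsAcceptanceSet μ {X : Lp ℝ ⊤ μ | ρ X = 0} :=
  ⟨hne, hproper, fun _ hX Y hXY => le_antisymm (hX ▸ hmono hXY) (hpos Y)⟩

theorem surplusInvariant_zeroSet (hsi : ∀ X : Lp ℝ ⊤ μ, ρ X = ρ (X ⊓ 0)) :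
    SurplusInvariant μ {X : Lp ℝ ⊤ μ | ρ X = 0} := by
  intro X hX Y hXY
  have hinf : Y ⊓ 0 = X ⊓ 0 := by
    rw [← neg_neg (Y ⊓ 0), ← neg_neg (X ⊓ 0), neg_inf, neg_inf, neg_zero, hXY]
  change ρ Y = 0
  rw [hsi, hinf, ← hsi]
  exact hX

end zeroSet

variable [IsFiniteMeasure μ]

theorem MeasureTheory.Lp.const_mono_s18 {p : ENNReal} : Monotone (Lp.const p μ : ℝ → Lp ℝ p μ) := by
  intro a b hab
  rw [← Lp.coeFn_le]
  filter_upwards [Lp.coeFn_const p μ a, Lp.coeFn_const p μ b] with ω ha hb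
  rw [ha, hb]
  exact hab

section rhoCash

variable {A : Set (Lp ℝ ⊤ μ)} {X : Lp ℝ ⊤ μ}

theorem rhoCash_nonpos_of_mem (hX : X ∈ A) : rhoCash μ A X ≤ 0 := by
  have hzero : (0 : ℝ) ∈ {m : ℝ | X + Lp.const ⊤ μ m ∈ A} := by simpa using hX
  by_cases hbdd : BddBelow {m : ℝ | X + Lp.const ⊤ μ m ∈ A}
  · exact csInf_le hbdd hzero
  · exact (Real.sInf_of_not_bddBelow hbdd).le

/-- `rhoCash μ A X ≠ 0` rules out the junk value `sInf = 0` of an empty or unbounded set. -/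
theorem rhoCash_add_const (α : ℝ) (h : rhoCash μ A X ≠ 0) :
    rhoCash μ A (X + Lp.const ⊤ μ α) = rhoCash μ A X - α := by
  set S := {m : ℝ | X + Lp.const ⊤ μ m ∈ A}
  have hne : S.Nonempty := Set.nonempty_iff_ne_empty.2 fun hS => h <| by
    rw [rhoCash, ← Real.sInf_empty, ← hS]
  have hbdd : BddBelow S := by
    by_contra hS
    exact h (Real.sInf_of_not_bddBelow hS)
  have hshift : {m : ℝ | X + Lp.const ⊤ μ α + Lp.const ⊤ μ m ∈ A} =
      OrderIso.addRight (-α) '' S := by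
    ext m
    simp [Set.image_add_right, S, add_assoc, ← map_add, add_comm α]
  rw [rhoCash, hshift, ← OrderIso.map_csInf' _ hne hbdd, OrderIso.addRight_apply,
    ← sub_eq_add_neg]
  rfl

theorem cashAdditiveSubjectToPositivity_of_eq_max_rhoCash {ρ : Lp ℝ ⊤ μ → ℝ}
    (hrep : ∀ X, ρ X = max (rhoCash μ A X) 0) : CashAdditiveSubjectToPositivity μ ρ := by
  intro X α hα
  have hρX : ρ X = rhoCash μ A X := by grind [hrep X]
  have hshift := rhoCash_add_const α (hρX ▸ (le_max_right α 0).trans_lt hα).ne'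
  rw [hrep, hshift, ← hρX, max_eq_left (by linarith [le_max_left α 0])]

end rhoCash

namespace CashAdditiveSubjectToPositivity

variable {ρ : Lp ℝ ⊤ μ → ℝ} {X : Lp ℝ ⊤ μ}

theorem apply_add_self_eq_zero (hcasp : CashAdditiveSubjectToPositivity μ ρ)
    (hmono : Antitone ρ) (hpos : ∀ X, 0 ≤ ρ X) (hX : 0 < ρ X) :
    ρ (X + Lp.const ⊤ μ (ρ X)) = 0 := by
  refine le_antisymm (le_of_forall_pos_le_add fun ε hε => ?_) (hpos _)
  set δ := min ε (ρ X / 2)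
  have hδ : 0 < δ := lt_min hε (half_pos hX)
  have hcash : ρ (X + Lp.const ⊤ μ (ρ X - δ)) = δ := by
    rw [hcasp X _ (max_lt (by linarith) hX)]
    ring
  have hle : X + Lp.const ⊤ μ (ρ X - δ) ≤ X + Lp.const ⊤ μ (ρ X) :=
    add_le_add_right (Lp.const_mono_s18 (by linarith)) X
  calc ρ (X + Lp.const ⊤ μ (ρ X))
      ≤ ρ (X + Lp.const ⊤ μ (ρ X - δ)) := hmono hle
    _ = δ := hcash
    _ ≤ 0 + ε := by rw [zero_add]; exact min_le_left _ _

theorem apply_add_const_pos (hcasp : CashAdditiveSubjectToPositivity μ ρ)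
    (hX : 0 < ρ X) {m : ℝ} (hm : m < ρ X) :
    0 < ρ (X + Lp.const ⊤ μ m) := by
  rw [hcasp X m (max_lt hm hX)]
  linarith

theorem rhoCash_zeroSet_eq (hcasp : CashAdditiveSubjectToPositivity μ ρ)
    (hmono : Antitone ρ) (hpos : ∀ X, 0 ≤ ρ X) (hX : 0 < ρ X) :
    rhoCash μ {Y : Lp ℝ ⊤ μ | ρ Y = 0} X = ρ X := by
  refine IsLeast.csInf_eq ⟨hcasp.apply_add_self_eq_zero hmono hpos hX, fun m hm => ?_⟩
  by_contra! hlt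
  exact (hcasp.apply_add_const_pos hX hlt).ne' hm

theorem eq_max_rhoCash_zeroSet (hcasp : CashAdditiveSubjectToPositivity μ ρ)
    (hmono : Antitone ρ) (hpos : ∀ X, 0 ≤ ρ X) (X : Lp ℝ ⊤ μ) :
    ρ X = max (rhoCash μ {Y : Lp ℝ ⊤ μ | ρ Y = 0} X) 0 := by
  rcases (hpos X).eq_or_lt with hX | hX
  · rw [← hX, max_eq_right (rhoCash_nonpos_of_mem hX.symm)]
  · rw [hcasp.rhoCash_zeroSet_eq hmono hpos hX, max_eq_left hX.le]

end CashAdditiveSubjectToPositivity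

theorem casp_iff_truncated_representation_general
    (μ : Measure Ω) [IsProbabilityMeasure μ]
    (ρ : Lp ℝ ⊤ μ → ℝ)
    (hmono : ∀ X Y : Lp ℝ ⊤ μ, X ≤ Y → ρ Y ≤ ρ X)
    (hpos : ∀ X, 0 ≤ ρ X)
    (hne : {X : Lp ℝ ⊤ μ | ρ X = 0}.Nonempty)
    (hproper : {X : Lp ℝ ⊤ μ | ρ X = 0} ≠ Set.univ)
    (hsi : ∀ X : Lp ℝ ⊤ μ, ρ X = ρ (X ⊓ 0)) :
    ((∃ A : Set (Lp ℝ ⊤ μ), IsAcceptanceSet μ A ∧ SurplusInvariant μ A ∧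
        ∀ X, ρ X = max (rhoCash μ A X) 0) ↔
      (∀ (X : Lp ℝ ⊤ μ) (α : ℝ), max α 0 < ρ X →
        ρ (X + Lp.const ⊤ μ α) = ρ X - α)) ∧
    ((∀ (X : Lp ℝ ⊤ μ) (α : ℝ), max α 0 < ρ X →
        ρ (X + Lp.const ⊤ μ α) = ρ X - α) →
      ∀ X, ρ X = max (rhoCash μ {Y : Lp ℝ ⊤ μ | ρ Y = 0} X) 0) := by
  have hanti : Antitone ρ := fun X Y h => hmono X Y h
  have hrep (hcasp : CashAdditiveSubjectToPositivity μ ρ) :=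
    hcasp.eq_max_rhoCash_zeroSet hanti hpos
  refine ⟨⟨fun ⟨_, _, _, hA⟩ => cashAdditiveSubjectToPositivity_of_eq_max_rhoCash hA,
    fun hcasp => ⟨_, isAcceptanceSet_zeroSet hanti hpos hne hproper,
      surplusInvariant_zeroSet hsi, hrep hcasp⟩⟩, hrep⟩

theorem casp_iff_truncated_representation
    (μ : Measure Ω) [IsProbabilityMeasure μ]
    (ρ : Lp ℝ ⊤ μ → ℝ)
    (hmono : ∀ X Y : Lp ℝ ⊤ μ, X ≤ Y → ρ Y ≤ ρ X)
    (hpos : ∀ X, 0 ≤ ρ X) (hnorm : ρ 0 = 0)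
    (hne : {X : Lp ℝ ⊤ μ | ρ X = 0}.Nonempty)
    (hproper : {X : Lp ℝ ⊤ μ | ρ X = 0} ≠ Set.univ)
    (hsi : ∀ X : Lp ℝ ⊤ μ, ρ X = ρ (X ⊓ 0)) :
    ((∃ A : Set (Lp ℝ ⊤ μ), IsAcceptanceSet μ A ∧ SurplusInvariant μ A ∧
        ∀ X, ρ X = max (rhoCash μ A X) 0) ↔
      (∀ (X : Lp ℝ ⊤ μ) (α : ℝ), max α 0 < ρ X →
        ρ (X + Lp.const ⊤ μ α) = ρ X - α)) ∧
    ((∀ (X : Lp ℝ ⊤ μ) (α : ℝ), max α 0 < ρ X →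
        ρ (X + Lp.const ⊤ μ α) = ρ X - α) →
      ∀ X, ρ X = max (rhoCash μ {Y : Lp ℝ ⊤ μ | ρ Y = 0} X) 0) :=
  casp_iff_truncated_representation_general μ ρ hmono hpos hne hproper hsi
end
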